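/- arXiv:1802.08397 — 2 statements merged into one kernel-verified Lean document; each statement's English description precedes it below -/
import Mathlib

section
/- For every matrix X ∈ ℝ^{n₁×n₂}, the nuclear norm admits the semidefinite representation ‖X‖_* = min over W₁ ∈ ℝ^{n₁×n₁} and W₂ ∈ ℝ^{n₂×n₂} of (1/2)(Tr(W₁) + Tr(W₂)) subject to the block matrix [[W₁, X],[Xᵀ, W₂]] being positive semidefinite; moreover the minimum is attained (e.g. by W₁ = UΣUᵀ and W₂ = VΣVᵀ where X = UΣVᵀ is a singular value decomposition of X). -/
open Matrix

noncomputable def nuclearNorm {n₁ n₂ : ℕ} (A : Matrix (Fin n₁) (Fin n₂) ℝ) : ℝ :=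
  ∑ i, Real.sqrt ((show (Aᵀ * A).IsHermitian by
    simpa using Matrix.isHermitian_conjTranspose_mul_self A).eigenvalues i)

/-!
Write `X = U Σ Vᴴ` with `V` orthogonal, `U` a partial isometry (`U Uᴴ U = U`) and `Σ` the
diagonal matrix of singular values, so that `‖X‖_* = tr Σ`. The choice `W₁ = U Σ Uᴴ`,
`W₂ = V Σ Vᴴ` is feasible, the block matrix being `[U; V] Σ [U; V]ᴴ`, and has objective `tr Σ`.
Conversely, compressing a feasible block matrix by `[U; -V]` gives a positive semidefinite matrix
of trace `tr (Uᴴ W₁ U) + tr (Vᴴ W₂ V) - 2 tr Σ ≥ 0`, and compression by a partial isometry does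
not increase the trace of a positive semidefinite matrix.
-/

namespace Matrix

variable {k m n R : Type*} [Fintype k] [Fintype m] [Fintype n]

theorem posSemidef_fromBlocks_mul_mul_conjTranspose [Ring R] [PartialOrder R] [StarRing R]
    {D : Matrix k k R} (hD : D.PosSemidef) (U : Matrix m k R) (V : Matrix n k R) :
    (fromBlocks (U * D * Uᴴ) (U * D * Vᴴ) (V * D * Uᴴ) (V * D * Vᴴ)).PosSemidef := by
  convert hD.mul_mul_conjTranspose_same (fromRows U V) using 1
  simp [conjTranspose_fromRows_eq_fromCols_conjTranspose]

theorem trace_conjTranspose_mul_mul_le_trace [CommRing R] [PartialOrder R] [StarRing R]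
    [AddLeftMono R] [DecidableEq m] {W : Matrix m m R} (hW : W.PosSemidef) {U : Matrix m k R}
    (hU : U * Uᴴ * U = U) : (Uᴴ * W * U).trace ≤ W.trace := by
  set P := 1 - U * Uᴴ
  have hP : P * P = P := by
    simp only [P, sub_mul, mul_sub, one_mul, mul_one, ← Matrix.mul_assoc, hU, sub_self, sub_zero]
  have hPWP : 0 ≤ (P * W * P).trace :=
    (hW.conjTranspose_mul_mul_same P).trace_nonneg.trans_eq <| by simp [P, conjTranspose_sub]
  have hPWP_eq : (P * W * P).trace = W.trace - (Uᴴ * W * U).trace := by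
    rw [trace_mul_cycle, hP, sub_mul, one_mul, trace_sub, Matrix.mul_assoc, trace_mul_comm U]
  exact sub_nonneg.mp (hPWP_eq ▸ hPWP)

theorem two_mul_trace_le_of_posSemidef_fromBlocks [DecidableEq m] [DecidableEq n]
    {W₁ : Matrix m m ℝ} {W₂ : Matrix n n ℝ} {X : Matrix m n ℝ}
    (hM : (fromBlocks W₁ X Xᴴ W₂).PosSemidef) {U : Matrix m k ℝ} {V : Matrix n k ℝ}
    (hU : U * Uᴴ * U = U) (hV : V * Vᴴ * V = V) :
    2 * (Uᴴ * X * V).trace ≤ W₁.trace + W₂.trace := by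
  have hW₁ : (Uᴴ * W₁ * U).trace ≤ W₁.trace :=
    trace_conjTranspose_mul_mul_le_trace (hM.submatrix Sum.inl) hU
  have hW₂ : (Vᴴ * W₂ * V).trace ≤ W₂.trace :=
    trace_conjTranspose_mul_mul_le_trace (hM.submatrix Sum.inr) hV
  have hX : (Vᴴ * Xᴴ * U).trace = (Uᴴ * X * V).trace := by
    simpa [Matrix.mul_assoc] using trace_conjTranspose (Uᴴ * X * V)
  have hZ := (hM.conjTranspose_mul_mul_same (fromRows U (-V))).trace_nonneg
  simp only [conjTranspose_fromRows_eq_fromCols_conjTranspose, Matrix.mul_assoc,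
    fromBlocks_mul_fromRows, fromCols_mul_fromRows] at hZ
  simp only [Matrix.mul_assoc, conjTranspose_neg, Matrix.mul_add, Matrix.mul_neg, Matrix.neg_mul,
    neg_neg, trace_add, trace_neg] at hZ hW₁ hW₂ hX ⊢
  linarith

theorem conjTranspose_mul_self_mul_diagonal [CommSemiring R] [StarRing R] [TrivialStar R]
    [DecidableEq n] {Y : Matrix m n R} {d : n → R} (hY : Yᴴ * Y = diagonal d) (c : n → R) :
    (Y * diagonal c)ᴴ * (Y * diagonal c) = diagonal (c * d * c) := by
  rw [conjTranspose_mul, diagonal_conjTranspose, Matrix.mul_assoc, ← Matrix.mul_assoc Yᴴ, hY]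
  simp [Pi.mul_def, mul_assoc]

-- The columns of `Y` where `σ` vanishes are zero: `Y * diagonal (1 - σ⁻¹ * σ)` has Gram matrix `0`.
theorem mul_diagonal_inv_mul_self_of_conjTranspose_mul_self [DecidableEq n] {Y : Matrix m n ℝ}
    {σ : n → ℝ} (hY : Yᴴ * Y = diagonal (σ * σ)) : Y * diagonal (σ⁻¹ * σ) = Y := by
  have hY₀ : Y * diagonal (1 - σ⁻¹ * σ) = 0 := by
    rw [← conjTranspose_mul_self_eq_zero, conjTranspose_mul_self_mul_diagonal hY, ← diagonal_zero]
    congr 1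
    funext i
    simp only [Pi.mul_apply, Pi.inv_apply, Pi.sub_apply, Pi.one_apply]
    rcases eq_or_ne (σ i) 0 with h | h
    · simp [h]
    · field_simp; ring
  rwa [Pi.sub_def, ← diagonal_sub, diagonal_one', Matrix.mul_sub, Matrix.mul_one, sub_eq_zero,
    eq_comm] at hY₀

noncomputable def singularValues [DecidableEq n] (X : Matrix m n ℝ) : n → ℝ :=
  fun i ↦ √((isHermitian_conjTranspose_mul_self X).eigenvalues i)

theorem conjTranspose_mul_self_mul_eigenvectorUnitary [DecidableEq n] {X : Matrix m n ℝ}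
    (hX : (Xᴴ * X).IsHermitian) :
    (X * (hX.eigenvectorUnitary : Matrix n n ℝ))ᴴ * (X * (hX.eigenvectorUnitary : Matrix n n ℝ)) =
      diagonal hX.eigenvalues := by
  have := hX.conjStarAlgAut_star_eigenvectorUnitary
  simp only [Unitary.conjStarAlgAut_star_apply, RCLike.ofReal_real_eq_id, Function.id_comp,
    star_eq_conjTranspose] at this
  rw [← this, conjTranspose_mul]
  simp only [Matrix.mul_assoc]

theorem exists_partialIsometry_svd [DecidableEq n] (X : Matrix m n ℝ) :
    ∃ (U : Matrix m n ℝ) (V : Matrix n n ℝ), U * Uᴴ * U = U ∧ V ∈ unitaryGroup n ℝ ∧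
      Uᴴ * U * diagonal X.singularValues = diagonal X.singularValues ∧
      X = U * diagonal X.singularValues * Vᴴ := by
  set hX := isHermitian_conjTranspose_mul_self X
  set σ := X.singularValues
  set V : Matrix n n ℝ := ↑hX.eigenvectorUnitary
  have hV : V * Vᴴ = 1 := mem_unitaryGroup_iff.mp hX.eigenvectorUnitary.2
  have hσ : hX.eigenvalues = σ * σ := funext fun i ↦
    (Real.mul_self_sqrt (eigenvalues_conjTranspose_mul_self_nonneg X i)).symm
  set Y := X * V
  have hY : Yᴴ * Y = diagonal (σ * σ) := hσ ▸ conjTranspose_mul_self_mul_eigenvectorUnitary hX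
  -- `σ⁻¹` is `0` where `σ` vanishes, so `U` has zero columns there.
  set U := Y * diagonal σ⁻¹
  have hUU : Uᴴ * U = diagonal (σ⁻¹ * (σ * σ) * σ⁻¹) := conjTranspose_mul_self_mul_diagonal hY _
  refine ⟨U, V, ?_, hX.eigenvectorUnitary.2, ?_, ?_⟩
  · rw [Matrix.mul_assoc, hUU, Matrix.mul_assoc, diagonal_mul_diagonal]
    congr 2
    funext i
    simp only [Pi.mul_apply, Pi.inv_apply]
    rcases eq_or_ne (σ i) 0 with h | h
    · simp [h]
    · field_simp
  · rw [hUU, diagonal_mul_diagonal]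
    congr 1
    funext i
    simp only [Pi.mul_apply, Pi.inv_apply]
    rcases eq_or_ne (σ i) 0 with h | h
    · simp [h]
    · field_simp
  · have hUσ : U * diagonal σ = Y := by
      rw [Matrix.mul_assoc, diagonal_mul_diagonal]
      exact mul_diagonal_inv_mul_self_of_conjTranspose_mul_self hY
    rw [hUσ, Matrix.mul_assoc, hV, Matrix.mul_one]

end Matrix

theorem nuclearNorm_eq_sum_singularValues {n₁ n₂ : ℕ} (X : Matrix (Fin n₁) (Fin n₂) ℝ) :
    nuclearNorm X = ∑ i, X.singularValues i :=
  rfl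

/-- the semidefinite representation of the nuclear norm.  The nuclear norm of `X`
is the least value of `(1/2)(Tr W₁ + Tr W₂)` over all `W₁, W₂` making the block matrix
`[[W₁, X], [Xᵀ, W₂]]` positive semidefinite, and this least value is attained. -/
theorem nuclearNorm_sdp_representation (n₁ n₂ : ℕ) (X : Matrix (Fin n₁) (Fin n₂) ℝ) :
    IsLeast
      { t : ℝ | ∃ (W₁ : Matrix (Fin n₁) (Fin n₁) ℝ) (W₂ : Matrix (Fin n₂) (Fin n₂) ℝ),
          (Matrix.fromBlocks W₁ X Xᵀ W₂).PosSemidef ∧ t = (1 / 2) * (W₁.trace + W₂.trace) }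
      (nuclearNorm X) := by
  obtain ⟨U, V, hU, hV, hUD, hX⟩ := exists_partialIsometry_svd X
  set D := diagonal X.singularValues
  have hVV : Vᴴ * V = 1 := mem_unitaryGroup_iff'.mp hV
  have hnorm : nuclearNorm X = D.trace := by
    rw [nuclearNorm_eq_sum_singularValues, trace_diagonal]
  refine ⟨⟨U * D * Uᴴ, V * D * Vᴴ, ?_, ?_⟩, ?_⟩
  · have hXt : Xᵀ = V * D * Uᴴ := by
      rw [← conjTranspose_eq_transpose_of_trivial, hX]
      simp [D, Matrix.mul_assoc]
    rw [hXt, hX]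
    exact posSemidef_fromBlocks_mul_mul_conjTranspose (.diagonal fun _ ↦ Real.sqrt_nonneg _) U V
  · rw [trace_mul_cycle, hUD, trace_mul_cycle, hVV, Matrix.one_mul, hnorm]
    ring
  · rintro t ⟨W₁, W₂, hM, rfl⟩
    rw [← conjTranspose_eq_transpose_of_trivial] at hM
    have hV' : V * Vᴴ * V = V := by rw [Matrix.mul_assoc, hVV, Matrix.mul_one]
    have hUXV : (Uᴴ * X * V).trace = D.trace := by
      rw [hX, ← Matrix.mul_assoc, ← Matrix.mul_assoc, hUD, Matrix.mul_assoc, hVV, Matrix.mul_one]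
    have := two_mul_trace_le_of_posSemidef_fromBlocks hM hU hV'
    rw [hnorm]
    linarith
end

section
/- Let x = Σ_{i=1}^r c_i v(z_i) ∈ ℂⁿ where c_i ∈ ℂ, z_i ∈ ℂ, and v(z) = (1, z, …, z^{n−1})ᵀ, and fix 1 ≤ n₁ ≤ n. Then the n₁ × (n−n₁+1) Hankel matrix H(x) admits the decomposition H(x) = V_{n₁} C V_{n−n₁+1}ᵀ, where C = diag[c₁,…,c_r] and V_k ∈ ℂ^{k×r} is the Vandermonde matrix with (j,i) entry z_i^{j−1}; consequently rank(H(x)) ≤ r. Moreover, if the z_i are pairwise distinct, all c_i ≠ 0, and min{n₁, n−n₁+1} ≥ r, then rank(H(x)) = r. -/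
open Matrix

/-- Vandermonde decomposition of the Hankel matrix of a spectrally sparse signal
x = Σᵢ cᵢ v(zᵢ): H(x) = V_{n₁} C V_{n-n₁+1}ᵀ, so rank H(x) ≤ r, with equality when the poles
are distinct, the coefficients nonzero, and min{n₁, n-n₁+1} ≥ r. -/
theorem hankel_vandermonde_decomposition (n n₁ r : ℕ) (hn₁ : 1 ≤ n₁) (hn : n₁ ≤ n)
    (c z : Fin r → ℂ) (x : Fin n → ℂ)
    (hx : ∀ j : Fin n, x j = ∑ i, c i * z i ^ (j : ℕ)) :
    -- the Hankel matrix [H(x)]_{jk} = x_{j+k-1} (in 1-based indexing)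
    let H : Matrix (Fin n₁) (Fin (n - n₁ + 1)) ℂ :=
      Matrix.of fun j k => x ⟨j.1 + k.1, by omega⟩
    -- the Vandermonde matrix V_m with (j,i) entry zᵢ^{j-1} (in 1-based indexing)
    let Vm : (m : ℕ) → Matrix (Fin m) (Fin r) ℂ := fun m => Matrix.of fun j i => z i ^ (j : ℕ)
    H = Vm n₁ * Matrix.diagonal c * (Vm (n - n₁ + 1))ᵀ
    ∧ H.rank ≤ r
    ∧ (Function.Injective z → (∀ i, c i ≠ 0) → r ≤ n₁ → r ≤ n - n₁ + 1 → H.rank = r) := by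
  intro H Vm
  have hdec : H = Vm n₁ * Matrix.diagonal c * (Vm (n - n₁ + 1))ᵀ := by
    ext j k
    simp only [H, Vm, Matrix.mul_apply, Matrix.of_apply, Matrix.transpose_apply,
      Matrix.diagonal_apply, Matrix.mul_apply]
    rw [hx]
    simp [Finset.sum_ite_eq, Finset.mul_sum, Finset.sum_mul, mul_comm, mul_assoc, pow_add]
  refine ⟨hdec, ?_, ?_⟩
  · calc H.rank ≤ (Vm n₁ * Matrix.diagonal c).rank := hdec ▸ rank_mul_le_left _ _
      _ ≤ (Vm n₁).rank := rank_mul_le_left _ _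
      _ ≤ r := (rank_le_card_width _).trans (by simp)
  · intro hz hc hr1 hr2
    refine le_antisymm ?_ ?_
    · calc H.rank ≤ (Vm n₁ * Matrix.diagonal c).rank := hdec ▸ rank_mul_le_left _ _
        _ ≤ (Vm n₁).rank := rank_mul_le_left _ _
        _ ≤ r := (rank_le_card_width _).trans (by simp)
    · set f : Fin r → Fin n₁ := Fin.castLE hr1
      set g : Fin r → Fin (n - n₁ + 1) := Fin.castLE hr2
      set P : Matrix (Fin r) (Fin n₁) ℂ := Matrix.of fun i j => if f i = j then (1:ℂ) else 0
      set Q : Matrix (Fin (n - n₁ + 1)) (Fin r) ℂ :=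
        Matrix.of fun l k => if g k = l then (1:ℂ) else 0
      have hS : P * H * Q = (Matrix.vandermonde z)ᵀ * Matrix.diagonal c * Matrix.vandermonde z := by
        ext i k
        have h1 : (P * H * Q) i k = H (f i) (g k) := by
          simp [P, Q, Matrix.mul_apply, Finset.sum_ite_eq, Finset.sum_ite_eq']
        rw [h1]
        simp only [H, Matrix.of_apply, Matrix.mul_apply, Matrix.transpose_apply,
          Matrix.diagonal_apply, Matrix.vandermonde]
        rw [hx]
        simp [Finset.sum_ite_eq, f, g, pow_add]
        congr 1; ext j; ring
      have hunit : IsUnit ((Matrix.vandermonde z)ᵀ * Matrix.diagonal c *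
          Matrix.vandermonde z).det := by
        rw [Matrix.det_mul, Matrix.det_mul, Matrix.det_transpose, Matrix.det_diagonal]
        exact ((Matrix.det_vandermonde_ne_zero_iff.mpr hz).isUnit.mul
          (isUnit_iff_ne_zero.mpr (Finset.prod_ne_zero_iff.mpr fun i _ => hc i))).mul
          (Matrix.det_vandermonde_ne_zero_iff.mpr hz).isUnit
      have : ((Matrix.vandermonde z)ᵀ * Matrix.diagonal c * Matrix.vandermonde z).rank = r := by
        rw [Matrix.rank_of_isUnit _ ((Matrix.isUnit_iff_isUnit_det _).mpr hunit)]
        simp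
      calc r = (P * H * Q).rank := by rw [hS, this]
        _ ≤ (P * H).rank := rank_mul_le_left _ _
        _ ≤ H.rank := rank_mul_le_right _ _
end
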